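/- arXiv:2206.07571 — 5 statements merged into one kernel-verified Lean document; each statement's English description precedes it below -/
import Mathlib

section
/- Expander mixing lemma for bipartite graphs: if G is a connected Δ-regular bipartite graph on parts V_0 ∪ V_1, then for any S ⊆ V_0 and T ⊆ V_1, the number of edges between S and T satisfies |E(S,T)| ≤ (Δ/|V_0|)·|S|·|T| + λ(G)·√(|S|·|T|). -/
/-!
Expand `⟪1_S, A 1_T⟫` in an orthonormal eigenbasis of the adjacency matrix `A`. In a connected
`Δ`-regular graph a `Δ`-eigenvector lies in the kernel of the Laplacian, hence is constant; in a
bipartite graph, flipping the sign on `V₁` turns a `-Δ`-eigenvector into a `Δ`-eigenvector, so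
`-Δ`-eigenvectors are multiples of the sign vector `(1, -1)`. Each of these two directions
contributes `Δ|S||T|/(2|V₀|)`, and by Cauchy–Schwarz and Bessel's inequality the other
eigenvalues, all at most `λ(G)` in absolute value, contribute at most `λ(G)‖1_S‖‖1_T‖`.
-/

open Finset Matrix SimpleGraph
open scoped RealInnerProductSpace

theorem Finset.sum_mul_le_mul_sum_abs {ι : Type*} {s : Finset ι} {f g : ι → ℝ} {M : ℝ}
    (hf : ∀ i ∈ s, |f i| ≤ M) : ∑ i ∈ s, f i * g i ≤ M * ∑ i ∈ s, |g i| := by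
  rw [Finset.mul_sum]
  refine Finset.sum_le_sum fun i hi => ?_
  calc f i * g i ≤ |f i| * |g i| := by rw [← abs_mul]; exact le_abs_self _
    _ ≤ M * |g i| := by gcongr; exact hf i hi

section InnerProductSpace

variable {ι E : Type*} [NormedAddCommGroup E] [InnerProductSpace ℝ E]

theorem Orthonormal.sum_abs_inner_mul_inner_le {v : ι → E} (hv : Orthonormal ℝ v)
    (s : Finset ι) (x y : E) :
    ∑ i ∈ s, |⟪v i, x⟫ * ⟪v i, y⟫| ≤ ‖x‖ * ‖y‖ := by
  have bessel : ∀ z, √(∑ i ∈ s, |⟪v i, z⟫| ^ 2) ≤ ‖z‖ := fun z =>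
    (Real.sqrt_le_left (norm_nonneg z)).2 (by simpa using hv.sum_inner_products_le z (s := s))
  simp_rw [abs_mul]
  exact (Real.sum_mul_le_sqrt_mul_sqrt s _ _).trans
    (mul_le_mul (bessel x) (bessel y) (Real.sqrt_nonneg _) (norm_nonneg x))

theorem Orthonormal.sum_abs_inner_mul_inner_le_of_eq_smul {v : ι → E} (hv : Orthonormal ℝ v)
    {s : Finset ι} {w : E} (hw : ∀ i ∈ s, ∃ c : ℝ, v i = c • w) (x y : E) :
    ∑ i ∈ s, |⟪v i, x⟫ * ⟪v i, y⟫| ≤ |⟪w, x⟫ * ⟪w, y⟫| / ‖w‖ ^ 2 := by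
  rcases eq_or_ne w 0 with rfl | hw0
  · rw [Finset.sum_eq_zero fun i hi => by obtain ⟨c, hc⟩ := hw i hi; simp [hc]]
    simp
  have hnorm : ‖w‖ ≠ 0 := norm_ne_zero_iff.2 hw0
  -- `v i = c • w` with `c = ⟪v i, w⟫ / ‖w‖ ^ 2`; Bessel's inequality for `w` then bounds `∑ c ^ 2`.
  have hterm : ∀ i ∈ s,
      |⟪v i, x⟫ * ⟪v i, y⟫| = ⟪v i, w⟫ ^ 2 * (|⟪w, x⟫ * ⟪w, y⟫| / ‖w‖ ^ 4) := by
    intro i hi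
    obtain ⟨c, hc⟩ := hw i hi
    simp only [hc, real_inner_smul_left, real_inner_self_eq_norm_sq, abs_mul]
    field_simp
    rw [sq_abs]
    ring
  calc ∑ i ∈ s, |⟪v i, x⟫ * ⟪v i, y⟫|
      = (∑ i ∈ s, ⟪v i, w⟫ ^ 2) * (|⟪w, x⟫ * ⟪w, y⟫| / ‖w‖ ^ 4) := by
        rw [Finset.sum_mul]; exact Finset.sum_congr rfl hterm
    _ ≤ ‖w‖ ^ 2 * (|⟪w, x⟫ * ⟪w, y⟫| / ‖w‖ ^ 4) := by
        gcongr; simpa using hv.sum_inner_products_le w (s := s)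
    _ = |⟪w, x⟫ * ⟪w, y⟫| / ‖w‖ ^ 2 := by field_simp

variable [Fintype ι] {T : E →ₗ[ℝ] E}

theorem LinearMap.IsSymmetric.inner_map_eq_sum_eigenvalues (hT : T.IsSymmetric)
    (b : OrthonormalBasis ι ℝ E) {μ : ι → ℝ} (hb : ∀ i, T (b i) = μ i • b i) (x y : E) :
    ⟪x, T y⟫ = ∑ i, μ i * (⟪b i, x⟫ * ⟪b i, y⟫) := by
  rw [← b.sum_inner_mul_inner]
  refine Finset.sum_congr rfl fun i _ => ?_
  rw [← hT, hb, real_inner_smul_left, real_inner_comm]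
  ring

theorem LinearMap.IsSymmetric.inner_map_le_of_eigenvectors_eq_smul (hT : T.IsSymmetric)
    (b : OrthonormalBasis ι ℝ E) {μ : ι → ℝ} (hb : ∀ i, T (b i) = μ i • b i) {d lam : ℝ}
    {wp wm : E} (hp : ∀ i, μ i = d → ∃ c : ℝ, b i = c • wp)
    (hm : ∀ i, μ i = -d → ∃ c : ℝ, b i = c • wm)
    (hrest : ∀ i, μ i ≠ d → μ i ≠ -d → |μ i| ≤ lam) (hlam : 0 ≤ lam) (x y : E) :
    ⟪x, T y⟫ ≤ |d| * (|⟪wp, x⟫ * ⟪wp, y⟫| / ‖wp‖ ^ 2) + |d| * (|⟪wm, x⟫ * ⟪wm, y⟫| / ‖wm‖ ^ 2)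
      + lam * (‖x‖ * ‖y‖) := by
  classical
  set sp := univ.filter fun i => μ i = d
  set sm := (univ.filter fun i => μ i ≠ d).filter fun i => μ i = -d
  set s0 := (univ.filter fun i => μ i ≠ d).filter fun i => μ i ≠ -d
  have hsplit : ∑ i, μ i * (⟪b i, x⟫ * ⟪b i, y⟫) = ∑ i ∈ sp, μ i * (⟪b i, x⟫ * ⟪b i, y⟫)
      + ∑ i ∈ sm, μ i * (⟪b i, x⟫ * ⟪b i, y⟫) + ∑ i ∈ s0, μ i * (⟪b i, x⟫ * ⟪b i, y⟫) := by
    rw [add_assoc, Finset.sum_filter_add_sum_filter_not, Finset.sum_filter_add_sum_filter_not]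
  rw [hT.inner_map_eq_sum_eigenvalues b hb, hsplit]
  gcongr ?_ + ?_ + ?_
  · refine (Finset.sum_mul_le_mul_sum_abs (M := |d|) fun i hi => ?_).trans ?_
    · rw [(mem_filter.1 hi).2]
    · exact mul_le_mul_of_nonneg_left (b.orthonormal.sum_abs_inner_mul_inner_le_of_eq_smul
        (fun i hi => hp i (mem_filter.1 hi).2) x y) (abs_nonneg d)
  · refine (Finset.sum_mul_le_mul_sum_abs (M := |d|) fun i hi => ?_).trans ?_
    · rw [(mem_filter.1 hi).2, abs_neg]
    · exact mul_le_mul_of_nonneg_left (b.orthonormal.sum_abs_inner_mul_inner_le_of_eq_smul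
        (fun i hi => hm i (mem_filter.1 hi).2) x y) (abs_nonneg d)
  · refine (Finset.sum_mul_le_mul_sum_abs (M := lam) fun i hi => ?_).trans ?_
    · simp only [s0, mem_filter] at hi
      exact hrest i hi.1.2 hi.2
    · exact mul_le_mul_of_nonneg_left (b.orthonormal.sum_abs_inner_mul_inner_le s0 x y) hlam

end InnerProductSpace

theorem Matrix.IsHermitian.dotProduct_mulVec_le_of_eigenvectors_eq_smul {n : Type*} [Fintype n]
    [DecidableEq n] {A : Matrix n n ℝ} (hA : A.IsHermitian) {d lam : ℝ} {wp wm : n → ℝ}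
    (hp : ∀ i, hA.eigenvalues i = d → ∃ c : ℝ, WithLp.ofLp (hA.eigenvectorBasis i) = c • wp)
    (hm : ∀ i, hA.eigenvalues i = -d → ∃ c : ℝ, WithLp.ofLp (hA.eigenvectorBasis i) = c • wm)
    (hrest : ∀ i, hA.eigenvalues i ≠ d → hA.eigenvalues i ≠ -d → |hA.eigenvalues i| ≤ lam)
    (hlam : 0 ≤ lam) (x y : n → ℝ) :
    x ⬝ᵥ A *ᵥ y ≤ |d| * (|x ⬝ᵥ wp * y ⬝ᵥ wp| / (wp ⬝ᵥ wp))
      + |d| * (|x ⬝ᵥ wm * y ⬝ᵥ wm| / (wm ⬝ᵥ wm)) + lam * √((x ⬝ᵥ x) * (y ⬝ᵥ y)) := by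
  have key := (isSymmetric_toEuclideanLin_iff.2 hA).inner_map_le_of_eigenvectors_eq_smul
    hA.eigenvectorBasis
    (fun i => WithLp.ofLp_injective 2 (by simpa using hA.mulVec_eigenvectorBasis i))
    (wp := WithLp.toLp 2 wp) (wm := WithLp.toLp 2 wm)
    (fun i hi => (hp i hi).imp fun c hc => WithLp.ofLp_injective 2 hc)
    (fun i hi => (hm i hi).imp fun c hc => WithLp.ofLp_injective 2 hc) hrest hlam
    (WithLp.toLp 2 x) (WithLp.toLp 2 y)
  have hnn (v : n → ℝ) : 0 ≤ v ⬝ᵥ v := by simpa using dotProduct_self_star_nonneg v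
  simp only [norm_eq_sqrt_real_inner, toLpLin_apply, EuclideanSpace.inner_toLp_toLp,
    star_trivial] at key
  rwa [dotProduct_comm, Real.sq_sqrt (hnn wp), Real.sq_sqrt (hnn wm),
    ← Real.sqrt_mul (hnn x)] at key

theorem SimpleGraph.Connected.exists_eq_const_of_adjMatrix_mulVec_eq {V : Type*} [Fintype V]
    {G : SimpleGraph V} [DecidableRel G.Adj] (hconn : G.Connected) {Δ : ℕ}
    (hreg : G.IsRegularOfDegree Δ) {x : V → ℝ} (hx : G.adjMatrix ℝ *ᵥ x = (Δ : ℝ) • x) :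
    ∃ c : ℝ, x = c • 1 := by
  classical
  obtain ⟨v₀⟩ := hconn.nonempty
  have hker : G.lapMatrix ℝ *ᵥ x = 0 := by
    ext u
    rw [lapMatrix_mulVec_apply, ← adjMatrix_mulVec_apply, hx, hreg u]
    simp
  refine ⟨x v₀, funext fun v => ?_⟩
  simpa using
    (lapMatrix_mulVec_eq_zero_iff_forall_reachable G).1 hker v v₀ (hconn.preconnected v v₀)

section Bipartite

variable {V0 V1 : Type*} [Fintype V0] [Fintype V1] {G : SimpleGraph (V0 ⊕ V1)}
  [DecidableRel G.Adj]

theorem adjMatrix_mulVec_sign_mul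
    (hbip : ∀ u v : V0 ⊕ V1, G.Adj u v → (u.isLeft ∧ v.isRight) ∨ (u.isRight ∧ v.isLeft))
    (x : V0 ⊕ V1 → ℝ) :
    G.adjMatrix ℝ *ᵥ (Sum.elim (fun _ => 1) (fun _ => -1) * x) =
      -(Sum.elim (fun _ => 1) (fun _ => -1) * (G.adjMatrix ℝ *ᵥ x)) := by
  set σ : V0 ⊕ V1 → ℝ := Sum.elim (fun _ => 1) (fun _ => -1)
  have hσ : ∀ u v, G.Adj u v → σ v = -σ u := by
    intro u v huv
    rcases hbip u v huv with ⟨hu, hv⟩ | ⟨hu, hv⟩ <;>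
      cases u <;> cases v <;> simp_all [σ]
  ext u
  simp only [adjMatrix_mulVec_apply, Pi.mul_apply, Pi.neg_apply, Finset.mul_sum,
    ← Finset.sum_neg_distrib]
  refine Finset.sum_congr rfl fun v hv => ?_
  rw [hσ u v ((mem_neighborFinset G u v).1 hv)]
  ring

theorem exists_eq_smul_sign_of_adjMatrix_mulVec_eq_neg (hconn : G.Connected) {Δ : ℕ}
    (hreg : G.IsRegularOfDegree Δ)
    (hbip : ∀ u v : V0 ⊕ V1, G.Adj u v → (u.isLeft ∧ v.isRight) ∨ (u.isRight ∧ v.isLeft))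
    {x : V0 ⊕ V1 → ℝ} (hx : G.adjMatrix ℝ *ᵥ x = -(Δ : ℝ) • x) :
    ∃ c : ℝ, x = c • Sum.elim (fun _ => 1) (fun _ => -1) := by
  set σ : V0 ⊕ V1 → ℝ := Sum.elim (fun _ => 1) (fun _ => -1)
  have hσx : G.adjMatrix ℝ *ᵥ (σ * x) = (Δ : ℝ) • (σ * x) := by
    rw [adjMatrix_mulVec_sign_mul hbip, hx]
    ext u
    simp only [Pi.neg_apply, Pi.mul_apply, Pi.smul_apply, smul_eq_mul]
    ring
  obtain ⟨c, hc⟩ := hconn.exists_eq_const_of_adjMatrix_mulVec_eq hreg hσx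
  refine ⟨c, funext fun v => ?_⟩
  have hv := congrFun hc v
  cases v with
  | inl v => simpa [σ] using hv
  | inr v =>
    simp only [σ, Pi.mul_apply, Pi.smul_apply, Pi.one_apply, Sum.elim_inr, smul_eq_mul] at hv ⊢
    linarith

theorem card_adj_filter_eq_dotProduct_adjMatrix_mulVec [DecidableEq V0] [DecidableEq V1]
    (S : Finset V0) (T : Finset V1) :
    (#{p ∈ S ×ˢ T | G.Adj (.inl p.1) (.inr p.2)} : ℝ) =
      Sum.elim (fun v => if v ∈ S then 1 else 0) 0 ⬝ᵥ
        G.adjMatrix ℝ *ᵥ Sum.elim 0 (fun v => if v ∈ T then 1 else 0) := by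
  rw [card_filter, Nat.cast_sum, sum_product]
  simp only [dotProduct, mulVec, Fintype.sum_sum_type]
  simp

end Bipartite

/-- Expander mixing lemma for a connected `Δ`-regular bipartite graph on parts
`V₀ ∪ V₁`: for `S ⊆ V₀`, `T ⊆ V₁`,
`|E(S,T)| ≤ (Δ/|V₀|)·|S|·|T| + λ(G)·√(|S|·|T|)`, where
`λ(G) = max{|λ_i| : λ_i ≠ ±Δ}` over eigenvalues of the adjacency matrix. -/
theorem bipartite_expander_mixing {V0 V1 : Type*}
    [Fintype V0] [Fintype V1] [DecidableEq V0] [DecidableEq V1]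
    (hcard : Fintype.card V0 = Fintype.card V1)
    (G : SimpleGraph (V0 ⊕ V1)) [DecidableRel G.Adj]
    (hbip : ∀ u v : V0 ⊕ V1, G.Adj u v →
      (u.isLeft ∧ v.isRight) ∨ (u.isRight ∧ v.isLeft))
    (Δ : ℕ) (hreg : ∀ v, G.degree v = Δ)
    (hconn : G.Connected)
    (hH : (G.adjMatrix ℝ).IsHermitian)
    (lam : ℝ)
    (hlam : lam = sSup {r : ℝ | ∃ i : V0 ⊕ V1,
      hH.eigenvalues i ≠ (Δ : ℝ) ∧ hH.eigenvalues i ≠ -(Δ : ℝ) ∧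
        r = |hH.eigenvalues i|})
    (S : Finset V0) (T : Finset V1) :
    (((S ×ˢ T).filter fun p => G.Adj (Sum.inl p.1) (Sum.inr p.2)).card : ℝ) ≤
      (Δ : ℝ) / (Fintype.card V0) * S.card * T.card +
        lam * Real.sqrt ((S.card : ℝ) * T.card) := by
  set μ := hH.eigenvalues
  set x : V0 ⊕ V1 → ℝ := Sum.elim (fun v => if v ∈ S then 1 else 0) 0
  set y : V0 ⊕ V1 → ℝ := Sum.elim 0 (fun v => if v ∈ T then 1 else 0)
  have hp (i) (hi : μ i = Δ) : ∃ c : ℝ, WithLp.ofLp (hH.eigenvectorBasis i) = c • 1 :=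
    hconn.exists_eq_const_of_adjMatrix_mulVec_eq hreg (hi ▸ hH.mulVec_eigenvectorBasis i)
  have hm (i) (hi : μ i = -Δ) :
      ∃ c : ℝ, WithLp.ofLp (hH.eigenvectorBasis i) = c • Sum.elim (fun _ => 1) (fun _ => -1) :=
    exists_eq_smul_sign_of_adjMatrix_mulVec_eq_neg hconn hreg hbip
      (hi ▸ hH.mulVec_eigenvectorBasis i)
  have hbdd : BddAbove {r : ℝ | ∃ i, μ i ≠ Δ ∧ μ i ≠ -Δ ∧ r = |μ i|} :=
    ((Set.finite_range fun i => |μ i|).subset (by rintro _ ⟨i, -, -, rfl⟩; exact ⟨i, rfl⟩)).bddAbove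
  have hrest (i) (h₁ : μ i ≠ Δ) (h₂ : μ i ≠ -Δ) : |μ i| ≤ lam :=
    hlam ▸ le_csSup hbdd ⟨i, h₁, h₂, rfl⟩
  have hlam₀ : 0 ≤ lam := hlam ▸ Real.sSup_nonneg (by rintro _ ⟨i, -, -, rfl⟩; exact abs_nonneg _)
  calc (#{p ∈ S ×ˢ T | G.Adj (.inl p.1) (.inr p.2)} : ℝ)
      = x ⬝ᵥ G.adjMatrix ℝ *ᵥ y := card_adj_filter_eq_dotProduct_adjMatrix_mulVec S T
    _ ≤ _ := hH.dotProduct_mulVec_le_of_eigenvectors_eq_smul hp hm hrest hlam₀ x y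
    _ = Δ * (#S * #T / (Fintype.card V0 + Fintype.card V0))
          + Δ * (#S * #T / (Fintype.card V0 + Fintype.card V0)) + lam * √(#S * #T) := by
      simp [dotProduct, Fintype.sum_sum_type, x, y, ← hcard]
    _ = _ := by ring
end

section
/- Suppose the dual tensor code C = C_A ⊗ F_2^B + F_2^A ⊗ C_B is w-robust with 0 < w < d_A·d_B. Then for any codeword x ∈ C with |x| ≤ w, there exist subsets A' ⊆ A with |A'| ≤ |x|/d_B and B' ⊆ B with |B'| ≤ |x|/d_A, together with a decomposition x = c + r where c ∈ C_A ⊗ F_2^{B'} and r ∈ F_2^{A'} ⊗ C_B. -/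
open Finset

variable {A B : Type*} [Fintype A] [Fintype B]

/-- Hamming weight of a vector. -/
def wtv [DecidableEq A] (x : A → ZMod 2) : ℕ :=
  (Finset.univ.filter fun a => x a ≠ 0).card

/-- Hamming weight of a matrix. -/
def wtm (x : A → B → ZMod 2) : ℕ :=
  (Finset.univ.filter fun p : A × B => x p.1 p.2 ≠ 0).card

/-- The code of matrices all of whose columns lie in `CA`. -/
def colCode (CA : Submodule (ZMod 2) (A → ZMod 2)) :
    Submodule (ZMod 2) (A → B → ZMod 2) where
  carrier := {x | ∀ b : B, (fun a => x a b) ∈ CA}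
  zero_mem' := fun _ => CA.zero_mem
  add_mem' := fun hx hy b => CA.add_mem (hx b) (hy b)
  smul_mem' := fun c x hx b => CA.smul_mem c (hx b)

/-- The code of matrices all of whose rows lie in `CB`. -/
def rowCode (CB : Submodule (ZMod 2) (B → ZMod 2)) :
    Submodule (ZMod 2) (A → B → ZMod 2) where
  carrier := {x | ∀ a : A, x a ∈ CB}
  zero_mem' := fun _ => CB.zero_mem
  add_mem' := fun hx hy a => CB.add_mem (hx a) (hy a)
  smul_mem' := fun c x hx a => CB.smul_mem c (hx a)

/-- The tensor code: matrices whose columns lie in `CA` and rows lie in `CB`. -/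
def tensorCode (CA : Submodule (ZMod 2) (A → ZMod 2))
    (CB : Submodule (ZMod 2) (B → ZMod 2)) :
    Submodule (ZMod 2) (A → B → ZMod 2) where
  carrier := {x | (∀ b : B, (fun a => x a b) ∈ CA) ∧ (∀ a : A, x a ∈ CB)}
  zero_mem' := ⟨fun _ => CA.zero_mem, fun _ => CB.zero_mem⟩
  add_mem' := fun hx hy =>
    ⟨fun b => CA.add_mem (hx.1 b) (hy.1 b), fun a => CB.add_mem (hx.2 a) (hy.2 a)⟩
  smul_mem' := fun c x hx =>
    ⟨fun b => CA.smul_mem c (hx.1 b), fun a => CB.smul_mem c (hx.2 a)⟩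

/-- Minimum distance of a code of vectors: smallest weight of a nonzero codeword. -/
noncomputable def minDistV [DecidableEq A] (C : Submodule (ZMod 2) (A → ZMod 2)) : ℕ :=
  sInf {n | ∃ x ∈ C, x ≠ 0 ∧ wtv x = n}

/-- Minimum distance of a code of matrices. -/
noncomputable def minDistM (C : Submodule (ZMod 2) (A → B → ZMod 2)) : ℕ :=
  sInf {n | ∃ x ∈ C, x ≠ 0 ∧ wtm x = n}

/-- Dual of a code of vectors. -/
def dualV (C : Submodule (ZMod 2) (A → ZMod 2)) :
    Submodule (ZMod 2) (A → ZMod 2) where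
  carrier := {x | ∀ y ∈ C, ∑ a, x a * y a = 0}
  zero_mem' := by intro y hy; simp
  add_mem' := by
    intro x x' hx hx' y hy
    have h1 := hx y hy
    have h2 := hx' y hy
    simp only [Pi.add_apply, add_mul, Finset.sum_add_distrib, h1, h2, add_zero]
  smul_mem' := by
    intro c x hx y hy
    have h := hx y hy
    simp only [Pi.smul_apply, smul_eq_mul, mul_assoc, ← Finset.mul_sum, h, mul_zero]

/-- Dual of a code of matrices, w.r.t. the entrywise inner product. -/
def dualM (C : Submodule (ZMod 2) (A → B → ZMod 2)) :
    Submodule (ZMod 2) (A → B → ZMod 2) where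
  carrier := {x | ∀ y ∈ C, ∑ a, ∑ b, x a b * y a b = 0}
  zero_mem' := by intro y hy; simp
  add_mem' := by
    intro x x' hx hx' y hy
    have h1 := hx y hy
    have h2 := hx' y hy
    simp only [Pi.add_apply, add_mul, Finset.sum_add_distrib, h1, h2, add_zero]
  smul_mem' := by
    intro c x hx y hy
    have h := hx y hy
    simp only [Pi.smul_apply, smul_eq_mul, mul_assoc, ← Finset.mul_sum, h, mul_zero]

/-- `w`-robustness of the dual tensor code `C_A ⊗ F₂^B + F₂^A ⊗ C_B`:
every codeword of weight ≤ w has its support in `A' × B ∪ A × B'` with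
`|A'| ≤ |x|/d_B` and `|B'| ≤ |x|/d_A`. -/
def wRobust (CA : Submodule (ZMod 2) (A → ZMod 2)) (CB : Submodule (ZMod 2) (B → ZMod 2))
    (dA dB w : ℕ) : Prop :=
  ∀ x ∈ (colCode CA : Submodule (ZMod 2) (A → B → ZMod 2)) ⊔ rowCode CB,
    wtm x ≤ w →
      ∃ (A' : Finset A) (B' : Finset B),
        A'.card * dB ≤ wtm x ∧ B'.card * dA ≤ wtm x ∧
        ∀ a b, a ∉ A' → b ∉ B' → x a b = 0

/-! Write `x = c₀ + r₀` with `c₀` in the column code and `r₀` in the row code, and let `A'`, `B'`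
be the sets given by robustness; since `w < d_A d_B`, `|A'| < d_A` and `|B'| < d_B`. A functional
`φ` killing `C_B + F₂^{B'}` kills the rows of `c₀` outside `A'`, since there they differ from
rows of `x` by rows of `r₀`. Applied row by row, `φ` turns `c₀` into a vector of `C_A` vanishing
off `A'`, which is therefore zero. So each row of `c₀` agrees off `B'` with a codeword
`n_a ∈ C_B`, and the same argument for the transpose shows that `N = (n_a)_a` also has its
columns in `C_A`. Then `c = c₀ - N` lives on the columns `B'`, and `r = r₀ + N` has rows in `C_B`
vanishing off `B'`, hence zero outside `A'`. -/

lemma wtv_le_card_of_eq_zero_off {T : Type*} [Fintype T] [DecidableEq T] {y : T → ZMod 2}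
    {S : Finset T} (h : ∀ t ∉ S, y t = 0) : wtv y ≤ S.card :=
  card_le_card fun t ht => by
    by_contra hts
    exact (mem_filter.mp ht).2 (h t hts)

lemma eq_zero_of_wtv_lt_minDistV {T : Type*} [Fintype T] [DecidableEq T]
    {C : Submodule (ZMod 2) (T → ZMod 2)} {y : T → ZMod 2} (hy : y ∈ C)
    (hlt : wtv y < minDistV C) : y = 0 := by
  by_contra hne
  have hmem : wtv y ∈ {n | ∃ x ∈ C, x ≠ 0 ∧ wtv x = n} := ⟨y, hy, hne, rfl⟩
  exact (Nat.sInf_le hmem).not_gt hlt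

lemma eq_zero_of_eq_zero_off {T : Type*} [Fintype T] [DecidableEq T]
    {C : Submodule (ZMod 2) (T → ZMod 2)} {y : T → ZMod 2} (hy : y ∈ C) {S : Finset T}
    (hS : S.card < minDistV C) (h : ∀ t ∉ S, y t = 0) : y = 0 :=
  eq_zero_of_wtv_lt_minDistV hy ((wtv_le_card_of_eq_zero_off h).trans_lt hS)

/-- `F₂^S` as a subspace of `F₂^T`. -/
def vanishingOff {T : Type*} (S : Finset T) : Submodule (ZMod 2) (T → ZMod 2) :=
  Submodule.pi (↑S)ᶜ fun _ => ⊥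

lemma mem_vanishingOff {T : Type*} {S : Finset T} {v : T → ZMod 2} :
    v ∈ vanishingOff S ↔ ∀ t ∉ S, v t = 0 := by
  simp [vanishingOff, Submodule.mem_pi]

lemma dual_apply_rows_mem_of_mem_colCode {ι : Type*}
    {CA : Submodule (ZMod 2) (ι → ZMod 2)} {M : ι → B → ZMod 2} (hM : M ∈ colCode CA)
    (φ : Module.Dual (ZMod 2) (B → ZMod 2)) :
    (fun a => φ (M a)) ∈ CA := by
  classical
  have hsum :
      (fun a => φ (M a)) = ∑ b, φ (fun j => if b = j then 1 else 0) • fun a => M a b := by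
    funext a
    simp [φ.pi_apply_eq_sum_univ (M a), mul_comm]
  rw [hsum]
  exact sum_mem fun b _ => CA.smul_mem _ (hM b)

lemma rows_mem_of_rows_mem_off [DecidableEq A] {CA : Submodule (ZMod 2) (A → ZMod 2)}
    {W : Submodule (ZMod 2) (B → ZMod 2)} {M : A → B → ZMod 2} (hM : M ∈ colCode CA)
    {S : Finset A} (hS : S.card < minDistV CA) (hW : ∀ a ∉ S, M a ∈ W) (a : A) :
    M a ∈ W := by
  refine (Subspace.forall_mem_dualAnnihilator_apply_eq_zero_iff W (M a)).mp fun φ hφ => ?_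
  have hzero : (fun a => φ (M a)) = 0 :=
    eq_zero_of_eq_zero_off (dual_apply_rows_mem_of_mem_colCode hM φ) hS fun a ha =>
      (Submodule.mem_dualAnnihilator φ).mp hφ _ (hW a ha)
  exact congrFun hzero a

lemma exists_mem_tensorCode_eq_off [DecidableEq B] {CA : Submodule (ZMod 2) (A → ZMod 2)}
    {CB : Submodule (ZMod 2) (B → ZMod 2)} {M : A → B → ZMod 2} (hM : M ∈ colCode CA)
    {S : Finset B} (hS : S.card < minDistV CB) (hrows : ∀ a, M a ∈ CB ⊔ vanishingOff S) :
    ∃ N ∈ tensorCode CA CB, ∀ a, ∀ b ∉ S, N a b = M a b := by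
  have hchoice : ∀ a, ∃ n ∈ CB, ∀ b ∉ S, n b = M a b := fun a => by
    obtain ⟨n, hn, v, hv, hnv⟩ := Submodule.mem_sup.mp (hrows a)
    refine ⟨n, hn, fun b hb => ?_⟩
    rw [← hnv, Pi.add_apply, mem_vanishingOff.mp hv b hb, add_zero]
  choose N hNrows hNM using hchoice
  have hNtranspose : (fun b a => N a b) ∈ (colCode CB : Submodule _ (B → A → ZMod 2)) := hNrows
  have hNcols := rows_mem_of_rows_mem_off (W := CA) hNtranspose hS fun b hb => by
    simpa only [hNM _ b hb] using hM b
  exact ⟨N, ⟨hNcols, hNrows⟩, hNM⟩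

theorem robust_decomposition_general [DecidableEq A] [DecidableEq B]
    (CA : Submodule (ZMod 2) (A → ZMod 2)) (CB : Submodule (ZMod 2) (B → ZMod 2))
    (dA dB w : ℕ) (hdA : minDistV CA = dA) (hdB : minDistV CB = dB)
    (hrob : wRobust CA CB dA dB w) (hw : w < dA * dB)
    (x : A → B → ZMod 2)
    (hx : x ∈ (colCode CA : Submodule (ZMod 2) (A → B → ZMod 2)) ⊔ rowCode CB)
    (hwt : wtm x ≤ w) :
    ∃ (A' : Finset A) (B' : Finset B) (c r : A → B → ZMod 2),
      A'.card * dB ≤ wtm x ∧ B'.card * dA ≤ wtm x ∧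
      c ∈ (colCode CA : Submodule (ZMod 2) (A → B → ZMod 2)) ∧
      r ∈ (rowCode CB : Submodule (ZMod 2) (A → B → ZMod 2)) ∧
      (∀ a b, b ∉ B' → c a b = 0) ∧
      (∀ a b, a ∉ A' → r a b = 0) ∧
      x = c + r := by
  obtain ⟨A', B', hA', hB', hsupp⟩ := hrob x hx hwt
  have hA'lt : A'.card < minDistV CA :=
    hdA ▸ lt_of_mul_lt_mul_right (hA'.trans_lt (hwt.trans_lt hw)) (Nat.zero_le dB)
  have hB'lt : B'.card < minDistV CB :=
    hdB ▸ lt_of_mul_lt_mul_left (((mul_comm dA _).trans_le hB').trans_lt (hwt.trans_lt hw))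
      (Nat.zero_le dA)
  obtain ⟨c₀, hc₀, r₀, hr₀, rfl⟩ := Submodule.mem_sup.mp hx
  have hrows : ∀ a, c₀ a ∈ CB ⊔ vanishingOff B' :=
    rows_mem_of_rows_mem_off hc₀ hA'lt fun a ha => by
      have hxa : c₀ a + r₀ a ∈ vanishingOff B' := mem_vanishingOff.mpr (hsupp a · ha)
      simpa only [Pi.add_apply, add_sub_cancel_right] using
        Submodule.sub_mem _ (Submodule.mem_sup_right hxa) (Submodule.mem_sup_left (hr₀ a))
  obtain ⟨N, ⟨hNcols, hNrows⟩, hNc₀⟩ := exists_mem_tensorCode_eq_off hc₀ hB'lt hrows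
  have hc : ∀ a b, b ∉ B' → (c₀ - N) a b = 0 := fun a b hb =>
    sub_eq_zero.mpr (hNc₀ a b hb).symm
  refine ⟨A', B', c₀ - N, r₀ + N, hA', hB', Submodule.sub_mem _ hc₀ hNcols,
    Submodule.add_mem _ hr₀ hNrows, hc, fun a b ha => ?_, by abel⟩
  have hra : (r₀ + N) a ∈ CB := Submodule.add_mem _ (hr₀ a) (hNrows a)
  refine congrFun (eq_zero_of_eq_zero_off hra hB'lt fun b hb => ?_) b
  calc (r₀ + N) a b = (c₀ + r₀) a b - (c₀ - N) a b := by
        simp only [Pi.add_apply, Pi.sub_apply]; ring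
    _ = 0 := by rw [hsupp a b ha hb, hc a b hb, sub_zero]

theorem robust_decomposition [DecidableEq A] [DecidableEq B]
    (CA : Submodule (ZMod 2) (A → ZMod 2)) (CB : Submodule (ZMod 2) (B → ZMod 2))
    (dA dB w : ℕ) (hdA : minDistV CA = dA) (hdB : minDistV CB = dB)
    (hrob : wRobust CA CB dA dB w) (hw0 : 0 < w) (hw : w < dA * dB)
    (x : A → B → ZMod 2)
    (hx : x ∈ (colCode CA : Submodule (ZMod 2) (A → B → ZMod 2)) ⊔ rowCode CB)
    (hwt : wtm x ≤ w) :
    ∃ (A' : Finset A) (B' : Finset B) (c r : A → B → ZMod 2),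
      A'.card * dB ≤ wtm x ∧ B'.card * dA ≤ wtm x ∧
      c ∈ (colCode CA : Submodule (ZMod 2) (A → B → ZMod 2)) ∧
      r ∈ (rowCode CB : Submodule (ZMod 2) (A → B → ZMod 2)) ∧
      (∀ a b, b ∉ B' → c a b = 0) ∧
      (∀ a b, a ∉ A' → r a b = 0) ∧
      x = c + r :=
  robust_decomposition_general CA CB dA dB w hdA hdB hrob hw x hx hwt
end

section
/- Let C_A and C_B be codes of length Δ with minimum distances d_A, d_B such that the dual tensor code C_A ⊗ F_2^B + F_2^A ⊗ C_B is w-robust with w ≤ d_A·d_B/2. Then for any x ∈ F_2^{A×B} with d(x, C_A ⊗ F_2^B) + d(x, F_2^A ⊗ C_B) ≤ w, we have d(x, C_A ⊗ C_B) ≤ (3/2)·(d(x, C_A ⊗ F_2^B) + d(x, F_2^A ⊗ C_B)). -/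
open Finset

variable {A B : Type*} [Fintype A] [Fintype B]

/-- Hamming distance from a matrix `x` to a code `C`. -/
noncomputable def distTo (x : A → B → ZMod 2)
    (C : Submodule (ZMod 2) (A → B → ZMod 2)) : ℕ :=
  sInf {n | ∃ y ∈ C, wtm (x - y) = n}


section Aux

lemma wtm_le_of' [DecidableEq A] [DecidableEq B] {u s t : A → B → ZMod 2}
    (h : ∀ a b, u a b ≠ 0 → s a b ≠ 0 ∨ t a b ≠ 0) : wtm u ≤ wtm s + wtm t := by
  have hsub : (Finset.univ.filter fun p : A × B => u p.1 p.2 ≠ 0) ⊆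
      (Finset.univ.filter fun p : A × B => s p.1 p.2 ≠ 0) ∪
      (Finset.univ.filter fun p : A × B => t p.1 p.2 ≠ 0) := by
    intro p hp
    simp only [Finset.mem_filter, Finset.mem_union, Finset.mem_univ, true_and] at hp ⊢
    exact h p.1 p.2 hp
  calc wtm u ≤ _ := Finset.card_le_card hsub
  _ ≤ _ := Finset.card_union_le _ _

lemma eq_zero_of_wtm {u : A → B → ZMod 2} (h : wtm u = 0) : u = 0 := by
  funext a b
  show u a b = 0
  by_contra hb
  have hmem : (⟨a, b⟩ : A × B) ∈ Finset.univ.filter (fun p : A × B => u p.1 p.2 ≠ 0) := by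
    simp [hb]
  rw [wtm, Finset.card_eq_zero] at h
  rw [h] at hmem
  exact absurd hmem (Finset.notMem_empty _)

lemma distTo_le' (x : A → B → ZMod 2) {C : Submodule (ZMod 2) (A → B → ZMod 2)}
    {y : A → B → ZMod 2} (hy : y ∈ C) : distTo x C ≤ wtm (x - y) :=
  Nat.sInf_le ⟨y, hy, rfl⟩

lemma distTo_exists (x : A → B → ZMod 2) (C : Submodule (ZMod 2) (A → B → ZMod 2)) :
    ∃ y ∈ C, wtm (x - y) = distTo x C :=
  Nat.sInf_mem (⟨wtm (x - 0), 0, C.zero_mem, rfl⟩ :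
    Set.Nonempty {n | ∃ y ∈ C, wtm (x - y) = n})

lemma eq_zero_of_small_support {ι : Type*} [Fintype ι] [DecidableEq ι]
    {C : Submodule (ZMod 2) (ι → ZMod 2)} {v : ι → ZMod 2} (hv : v ∈ C)
    {S : Finset ι} (hsupp : ∀ a ∉ S, v a = 0) (hcard : S.card < minDistV C) :
    v = 0 := by
  by_contra hne
  have h1 : minDistV C ≤ wtv v := Nat.sInf_le ⟨v, hv, hne, rfl⟩
  have h2 : wtv v ≤ S.card := by
    apply Finset.card_le_card
    intro a ha
    rw [Finset.mem_filter] at ha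
    by_contra h
    exact ha.2 (hsupp a h)
  omega

lemma doubleDual {ι : Type*} [Fintype ι] [DecidableEq ι]
    (C : Submodule (ZMod 2) (ι → ZMod 2)) : dualV (dualV C) = C := by
  refine le_antisymm ?_ ?_
  · intro x hx
    by_contra hxC
    have hq : (Submodule.Quotient.mk x : (ι → ZMod 2) ⧸ C) ≠ 0 := by
      simpa [Submodule.Quotient.mk_eq_zero] using hxC
    have hφ : ¬ ∀ φ : Module.Dual (ZMod 2) ((ι → ZMod 2) ⧸ C),
        φ (Submodule.Quotient.mk x) = 0 := by
      rw [Module.forall_dual_apply_eq_zero_iff]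
      exact hq
    push_neg at hφ
    obtain ⟨φ, hφ⟩ := hφ
    set f : (ι → ZMod 2) →ₗ[ZMod 2] ZMod 2 := φ.comp C.mkQ with hf
    have hfx : f x ≠ 0 := hφ
    set v : ι → ZMod 2 := fun a => f (fun j => if a = j then 1 else 0) with hvdef
    have hfy : ∀ yy : ι → ZMod 2, f yy = ∑ a, yy a * v a := by
      intro yy
      conv_lhs => rw [pi_eq_sum_univ yy]
      rw [map_sum]
      refine Finset.sum_congr rfl fun a _ => ?_
      rw [map_smul, smul_eq_mul]
    have hvmem : v ∈ dualV C := by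
      intro yy hyy
      have h0 : f yy = 0 := by
        show φ (C.mkQ yy) = 0
        rw [Submodule.mkQ_apply, (Submodule.Quotient.mk_eq_zero C).mpr hyy, map_zero]
      rw [hfy] at h0
      calc ∑ a, v a * yy a = ∑ a, yy a * v a := by
            exact Finset.sum_congr rfl fun a _ => mul_comm _ _
      _ = 0 := h0
    exact hfx (by rw [hfy]; exact hx v hvmem)
  · intro x hx v hv
    have h0 := hv x hx
    calc ∑ a, x a * v a = ∑ a, v a * x a := Finset.sum_congr rfl fun a _ => mul_comm _ _
    _ = 0 := h0

end Aux

theorem close_to_tensor [DecidableEq A] [DecidableEq B]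
    (CA : Submodule (ZMod 2) (A → ZMod 2)) (CB : Submodule (ZMod 2) (B → ZMod 2))
    (dA dB w : ℕ) (hdA : minDistV CA = dA) (hdB : minDistV CB = dB)
    (hrob : wRobust CA CB dA dB w) (hw : 2 * w ≤ dA * dB)
    (x : A → B → ZMod 2)
    (hclose : distTo x (colCode CA) + distTo x (rowCode CB) ≤ w) :
    (distTo x (tensorCode CA CB) : ℝ) ≤
      (3 / 2) * ((distTo x (colCode CA) : ℝ) + (distTo x (rowCode CB) : ℝ)) := by
  classical
  obtain ⟨c, hc, hcw⟩ := distTo_exists x (colCode CA)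
  obtain ⟨r, hr, hrw⟩ := distTo_exists x (rowCode CB)
  have hc' : ∀ b, (fun a => c a b) ∈ CA := hc
  have hr' : ∀ a, r a ∈ CB := hr
  set dC := distTo x (colCode CA) with hdCdef
  set dR := distTo x (rowCode CB) with hdRdef
  by_cases hdeg : dA = 0 ∨ dB = 0
  · have hprod : dA * dB = 0 := by rcases hdeg with h | h <;> simp [h]
    have hw0 : w = 0 := by omega
    have hC0 : dC = 0 := by omega
    have hR0 : dR = 0 := by omega
    have hxc : x = c := by
      have h0 : wtm (x - c) = 0 := by rw [hcw, hC0]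
      have := eq_zero_of_wtm h0
      exact sub_eq_zero.mp this
    have hxr : x = r := by
      have h0 : wtm (x - r) = 0 := by rw [hrw, hR0]
      have := eq_zero_of_wtm h0
      exact sub_eq_zero.mp this
    have h1 : x ∈ colCode CA := hxc ▸ hc
    have h2 : x ∈ rowCode CB := hxr ▸ hr
    have hxmem : x ∈ tensorCode CA CB := ⟨h1, h2⟩
    have h0 : distTo x (tensorCode CA CB) = 0 := by
      have hle := distTo_le' x hxmem
      have hxx : wtm (x - x) = 0 := by simp [wtm, sub_self]
      omega
    rw [h0, hC0, hR0]
    norm_num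
  · push_neg at hdeg
    obtain ⟨hdA0, hdB0⟩ := hdeg
    have hdApos : 0 < dA := Nat.pos_of_ne_zero hdA0
    have hdBpos : 0 < dB := Nat.pos_of_ne_zero hdB0
    set z := c - r with hzdef
    have hzmem : z ∈ (colCode CA : Submodule (ZMod 2) (A → B → ZMod 2)) ⊔ rowCode CB :=
      Submodule.sub_mem _ (Submodule.mem_sup_left hc) (Submodule.mem_sup_right hr)
    have hside : ∀ a b, z a b ≠ 0 → (x - c) a b ≠ 0 ∨ (x - r) a b ≠ 0 := by
      intro a b hz
      by_contra hcon
      push_neg at hcon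
      obtain ⟨h1, h2⟩ := hcon
      apply hz
      have e1 : x a b - c a b = 0 := h1
      have e2 : x a b - r a b = 0 := h2
      have hc1 : x a b = c a b := sub_eq_zero.mp e1
      have hr1 : x a b = r a b := sub_eq_zero.mp e2
      show c a b - r a b = 0
      rw [← hc1, ← hr1, sub_self]
    have hzw : wtm z ≤ dC + dR := by
      have h := wtm_le_of' hside
      omega
    obtain ⟨A', B', hA, hB, hz0⟩ := hrob z hzmem (le_trans hzw hclose)
    have hcr : ∀ a b, a ∉ A' → b ∉ B' → c a b = r a b := by
      intro a b ha hb
      exact sub_eq_zero.mp (show c a b - r a b = 0 from hz0 a b ha hb)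
    have hAlt : A'.card < dA := by
      by_contra hcontra
      push_neg at hcontra
      have h1 : dA * dB ≤ A'.card * dB := Nat.mul_le_mul_right _ hcontra
      have h2 : dA * dB ≤ w := le_trans h1 (le_trans hA (le_trans hzw hclose))
      have h3 : 0 < dA * dB := Nat.mul_pos hdApos hdBpos
      omega
    have hBlt : B'.card < dB := by
      by_contra hcontra
      push_neg at hcontra
      have h1 : dA * dB ≤ B'.card * dA := by
        calc dA * dB = dB * dA := Nat.mul_comm _ _
        _ ≤ B'.card * dA := Nat.mul_le_mul_right _ hcontra
      have h2 : dA * dB ≤ w := le_trans h1 (le_trans hB (le_trans hzw hclose))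
      have h3 : 0 < dA * dB := Nat.mul_pos hdApos hdBpos
      omega
    have hkey : 2 * (A'.card * B'.card) ≤ wtm z := by
      have h1 : (A'.card * dB) * (B'.card * dA) ≤ wtm z * w :=
        Nat.mul_le_mul hA (le_trans hB (le_trans hzw hclose))
      have h6 : (2 * (A'.card * B'.card)) * (dA * dB) ≤ wtm z * (dA * dB) := by
        calc (2 * (A'.card * B'.card)) * (dA * dB)
            = 2 * ((A'.card * dB) * (B'.card * dA)) := by ring
        _ ≤ 2 * (wtm z * w) := Nat.mul_le_mul_left _ h1
        _ = wtm z * (2 * w) := by ring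
        _ ≤ wtm z * (dA * dB) := Nat.mul_le_mul_left _ hw
      exact Nat.le_of_mul_le_mul_right h6 (Nat.mul_pos hdApos hdBpos)
    set y : A → B → ZMod 2 := fun a b => if a ∈ A' then c a b else r a b with hydef
    have hycol : ∀ b ∉ B', (fun a => y a b) ∈ CA := by
      intro b hb
      have heq : (fun a => y a b) = fun a => c a b := by
        funext a
        by_cases ha : a ∈ A'
        · simp [hydef, ha]
        · simp [hydef, ha, hcr a b ha hb]
      rw [heq]
      exact hc' b
    have hyrow : ∀ a ∉ A', y a ∈ CB := by
      intro a ha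
      have heq : y a = r a := by funext b; simp [hydef, ha]
      rw [heq]
      exact hr' a
    have hxy : wtm (x - y) ≤ dC + dR := by
      have h := wtm_le_of' (u := x - y) (s := x - c) (t := x - r) ?_
      · omega
      · intro a b hne
        by_cases ha : a ∈ A'
        · left
          simpa [hydef, ha] using hne
        · right
          simpa [hydef, ha] using hne
    have hext : ∀ b : B, ∃ u, u ∈ CA ∧ ∀ a, a ∉ A' → u a = y a b := by
      intro b
      by_cases hb : b ∈ B'
      · let S : Submodule (ZMod 2) (A → ZMod 2) :=
          { carrier := {v | ∀ a, a ∉ A' → v a = 0}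
            zero_mem' := fun _ _ => rfl
            add_mem' := fun hx1 hy1 a ha => by
              simp only [Pi.add_apply]
              rw [hx1 a ha, hy1 a ha, add_zero]
            smul_mem' := fun c1 x1 hx1 a ha => by
              simp only [Pi.smul_apply]
              rw [hx1 a ha, smul_zero] }
        have hmem : (fun a => y a b) ∈ CA ⊔ S := by
          rw [← doubleDual (CA ⊔ S)]
          intro v hv
          have hvCA : ∀ u ∈ CA, ∑ a, v a * u a = 0 := fun u hu =>
            hv u (Submodule.mem_sup_left hu)
          have hvA' : ∀ a ∈ A', v a = 0 := by
            intro a ha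
            have hsingle : (fun a' => if a' = a then (1 : ZMod 2) else 0) ∈ S := by
              intro a' ha'
              exact if_neg (by intro h; subst h; exact ha' ha)
            have h0 := hv _ (Submodule.mem_sup_right hsingle)
            simpa [mul_ite, Finset.sum_ite_eq'] using h0
          have hg : (fun b' => ∑ a, v a * y a b') ∈ CB := by
            have heq : (fun b' => ∑ a, v a * y a b') = ∑ a, v a • y a := by
              funext b'
              simp [Finset.sum_apply]
            rw [heq]
            refine Submodule.sum_mem _ fun a _ => ?_
            by_cases ha : a ∈ A'
            · rw [hvA' a ha, zero_smul]
              exact CB.zero_mem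
            · exact CB.smul_mem _ (hyrow a ha)
          have hg0 : ∀ b' ∉ B', (∑ a, v a * y a b') = 0 := fun b' hb' =>
            hvCA _ (hycol b' hb')
          have hgz : (fun b' => ∑ a, v a * y a b') = 0 :=
            eq_zero_of_small_support hg hg0 (by rw [hdB]; exact hBlt)
          have h0 : (∑ a, v a * y a b) = 0 := congrFun hgz b
          show (∑ a, y a b * v a) = 0
          calc ∑ a, y a b * v a = ∑ a, v a * y a b :=
                Finset.sum_congr rfl fun a _ => mul_comm _ _
          _ = 0 := h0
        obtain ⟨u', hu', s, hs, heq⟩ := Submodule.mem_sup.mp hmem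
        have hs' : ∀ a, a ∉ A' → s a = 0 := hs
        refine ⟨u', hu', fun a ha => ?_⟩
        have h1 : u' a + s a = y a b := congrFun heq a
        rwa [hs' a ha, add_zero] at h1
      · exact ⟨fun a => y a b, hycol b hb, fun a _ => rfl⟩
    choose u hu1 hu2 using hext
    set t : A → B → ZMod 2 := fun a b => if b ∈ B' then u b a else y a b with htdef
    have htcol : ∀ b, (fun a => t a b) ∈ CA := by
      intro b
      by_cases hb : b ∈ B'
      · have heq : (fun a => t a b) = u b := by funext a; simp [htdef, hb]
        rw [heq]
        exact hu1 b
      · have heq : (fun a => t a b) = fun a => y a b := by funext a; simp [htdef, hb]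
        rw [heq]
        exact hycol b hb
    have htrow_out : ∀ a ∉ A', t a ∈ CB := by
      intro a ha
      have heq : t a = y a := by
        funext b
        by_cases hb : b ∈ B'
        · simp [htdef, hb, hu2 b a ha]
        · simp [htdef, hb]
      rw [heq]
      exact hyrow a ha
    have htrow : ∀ a, t a ∈ CB := by
      intro a
      by_cases ha : a ∈ A'
      · have hmem2 : t a ∈ dualV (dualV CB) := by
          intro v hv
          have hcol2 : (fun a' => ∑ b, v b * t a' b) ∈ CA := by
            have heq : (fun a' => ∑ b, v b * t a' b) = ∑ b, v b • fun a' => t a' b := by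
              funext a'
              simp [Finset.sum_apply]
            rw [heq]
            exact Submodule.sum_mem _ fun b _ => CA.smul_mem _ (htcol b)
          have hz2 : ∀ a' ∉ A', (∑ b, v b * t a' b) = 0 := fun a' ha' =>
            hv (t a') (htrow_out a' ha')
          have h0 : (fun a' => ∑ b, v b * t a' b) = 0 :=
            eq_zero_of_small_support hcol2 hz2 (by rw [hdA]; exact hAlt)
          have h1 : (∑ b, v b * t a b) = 0 := congrFun h0 a
          show (∑ b, t a b * v b) = 0
          calc ∑ b, t a b * v b = ∑ b, v b * t a b :=
                Finset.sum_congr rfl fun b _ => mul_comm _ _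
          _ = 0 := h1
        rw [doubleDual CB] at hmem2
        exact hmem2
      · exact htrow_out a ha
    have ht : t ∈ tensorCode CA CB := ⟨htcol, htrow⟩
    have hyt : wtm (y - t) ≤ A'.card * B'.card := by
      rw [← Finset.card_product]
      apply Finset.card_le_card
      intro p hp
      rw [Finset.mem_filter] at hp
      rw [Finset.mem_product]
      by_contra hcon
      apply hp.2
      rcases not_and_or.mp hcon with h1 | h2
      · by_cases hb : p.2 ∈ B'
        · show y p.1 p.2 - t p.1 p.2 = 0
          simp [htdef, hb, hu2 p.2 p.1 h1]
        · show y p.1 p.2 - t p.1 p.2 = 0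
          simp [htdef, hb]
      · show y p.1 p.2 - t p.1 p.2 = 0
        simp [htdef, h2]
    have hxt : wtm (x - t) ≤ wtm (x - y) + wtm (y - t) := by
      apply wtm_le_of'
      intro a b hne
      by_contra hcon
      push_neg at hcon
      obtain ⟨h1, h2⟩ := hcon
      apply hne
      have e1 : x a b - y a b = 0 := h1
      have e2 : y a b - t a b = 0 := h2
      show x a b - t a b = 0
      have hx1 : x a b = y a b := sub_eq_zero.mp e1
      have hy1 : y a b = t a b := sub_eq_zero.mp e2
      rw [hx1, hy1, sub_self]
    have hfinal : distTo x (tensorCode CA CB) ≤ (dC + dR) + A'.card * B'.card := by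
      have hle := distTo_le' x ht
      omega
    have hRnat : 2 * (A'.card * B'.card) ≤ dC + dR := le_trans hkey hzw
    have c1 : (distTo x (tensorCode CA CB) : ℝ) ≤ ((dC + dR + A'.card * B'.card : ℕ) : ℝ) :=
      Nat.cast_le.mpr hfinal
    have c2 : ((2 * (A'.card * B'.card) : ℕ) : ℝ) ≤ ((dC + dR : ℕ) : ℝ) :=
      Nat.cast_le.mpr hRnat
    push_cast at c1 c2
    linarith
end

section
/- Every C_0-generator is orthogonal to every C_1-generator, i.e. the quantum Tanner code satisfies the CSS condition C_0-generators ⊆ C_1^⊥: if a codeword of C_A ⊗ C_B placed in the local view Q(v_0) of a vertex v_0 ∈ V_0 and a codeword of C_A^⊥ ⊗ C_B^⊥ placed in the local view Q(v_1) of a vertex v_1 ∈ V_1 have intersecting supports, their inner product over F_2 is zero. -/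
open Finset

variable {A B : Type*} [Fintype A] [Fintype B]

/-- CSS orthogonality of the generators of the quantum Tanner code: a codeword
of `C_A ⊗ C_B` placed in the local view `Q(v₀)` (via the injection `ι₀`) and a
codeword of `C_A^⊥ ⊗ C_B^⊥` placed in the local view `Q(v₁)` (via `ι₁`) have
zero inner product, given that the two local views intersect (if at all) in a
single shared row or a single shared column, labelled consistently. -/
theorem generators_orthogonal {Q : Type*} [Fintype Q] [DecidableEq Q]
    (CA : Submodule (ZMod 2) (A → ZMod 2)) (CB : Submodule (ZMod 2) (B → ZMod 2))
    (ι0 ι1 : A × B → Q) (h0 : Function.Injective ι0) (h1 : Function.Injective ι1)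
    (hint : (Set.range ι0 ∩ Set.range ι1 = ∅) ∨
      (∃ a0 : A, (∀ b : B, ι0 (a0, b) = ι1 (a0, b)) ∧
        ∀ p p' : A × B, ι0 p = ι1 p' → p.1 = a0 ∧ p = p') ∨
      (∃ b0 : B, (∀ a : A, ι0 (a, b0) = ι1 (a, b0)) ∧
        ∀ p p' : A × B, ι0 p = ι1 p' → p.2 = b0 ∧ p = p'))
    (x y : A → B → ZMod 2)
    (hx : x ∈ tensorCode CA CB)
    (hy : y ∈ tensorCode (dualV CA) (dualV CB)) :
    ∑ q : Q, (∑ p : A × B, if ι0 p = q then x p.1 p.2 else 0) *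
             (∑ p : A × B, if ι1 p = q then y p.1 p.2 else 0) = 0 := by
  classical
  have key : (∑ q : Q, (∑ p : A × B, if ι0 p = q then x p.1 p.2 else 0) *
             (∑ p : A × B, if ι1 p = q then y p.1 p.2 else 0)) =
      ∑ p : A × B, ∑ p' : A × B,
        if ι0 p = ι1 p' then x p.1 p.2 * y p'.1 p'.2 else 0 := by
    simp_rw [Finset.sum_mul_sum]
    rw [Finset.sum_comm]
    refine Finset.sum_congr rfl fun p _ => ?_
    rw [Finset.sum_comm]
    refine Finset.sum_congr rfl fun p' _ => ?_
    simp_rw [ite_mul, zero_mul, mul_ite, mul_zero]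
    by_cases h : ι0 p = ι1 p'
    · rw [if_pos h, Finset.sum_eq_single (ι0 p)]
      · simp [h]
      · intro q _ hq; simp [Ne.symm hq]
      · simp
    · rw [if_neg h]
      refine Finset.sum_eq_zero fun q _ => ?_
      by_cases h0q : ι0 p = q
      · subst h0q; rw [if_pos rfl, if_neg (fun hh => h hh.symm)]
      · rw [if_neg h0q]
  rw [key]
  rcases hint with hemp | ⟨a0, hrow, huniq⟩ | ⟨b0, hcol, huniq⟩
  · refine Finset.sum_eq_zero fun p _ => Finset.sum_eq_zero fun p' _ => ?_
    rw [if_neg]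
    intro h
    have : ι0 p ∈ Set.range ι0 ∩ Set.range ι1 := ⟨⟨p, rfl⟩, ⟨p', h.symm⟩⟩
    rw [hemp] at this
    exact this
  · have step : (∑ p : A × B, ∑ p' : A × B,
        if ι0 p = ι1 p' then x p.1 p.2 * y p'.1 p'.2 else 0) =
        ∑ p : A × B, if p.1 = a0 then x p.1 p.2 * y p.1 p.2 else 0 := by
      refine Finset.sum_congr rfl fun p _ => ?_
      by_cases hp : p.1 = a0
      · rw [if_pos hp, Finset.sum_eq_single p]
        · rw [if_pos]; have := hrow p.2; rw [← hp] at this; simpa using this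
        · intro p' _ hp'
          rw [if_neg]; intro h; exact hp' ((huniq p p' h).2).symm
        · simp
      · rw [if_neg hp]
        refine Finset.sum_eq_zero fun p' _ => ?_
        rw [if_neg]; intro h; exact hp (huniq p p' h).1
    rw [step]
    rw [Fintype.sum_prod_type]
    rw [Finset.sum_eq_single a0]
    · simp only [if_pos rfl]
      have h1 := hy.2 a0 (x a0) (hx.2 a0)
      calc (∑ b, x a0 b * y a0 b) = ∑ b, y a0 b * x a0 b := by
            simp_rw [mul_comm]
        _ = 0 := h1
    · intro a _ ha; exact Finset.sum_eq_zero fun b _ => if_neg ha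
    · simp
  · have step : (∑ p : A × B, ∑ p' : A × B,
        if ι0 p = ι1 p' then x p.1 p.2 * y p'.1 p'.2 else 0) =
        ∑ p : A × B, if p.2 = b0 then x p.1 p.2 * y p.1 p.2 else 0 := by
      refine Finset.sum_congr rfl fun p _ => ?_
      by_cases hp : p.2 = b0
      · rw [if_pos hp, Finset.sum_eq_single p]
        · rw [if_pos]; have := hcol p.1; rw [← hp] at this; simpa using this
        · intro p' _ hp'
          rw [if_neg]; intro h; exact hp' ((huniq p p' h).2).symm
        · simp
      · rw [if_neg hp]
        refine Finset.sum_eq_zero fun p' _ => ?_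
        rw [if_neg]; intro h; exact hp (huniq p p' h).1
    rw [step]
    rw [Fintype.sum_prod_type]
    rw [Finset.sum_comm]
    rw [Finset.sum_eq_single b0]
    · simp only [if_pos rfl]
      have h1 := hy.1 b0 (fun a => x a b0) (hx.1 b0)
      calc (∑ a, x a b0 * y a b0) = ∑ a, y a b0 * x a b0 := by
            simp_rw [mul_comm]
        _ = 0 := h1
    · intro b _ hb; exact Finset.sum_eq_zero fun a _ => if_neg hb
    · simp
end

section
/- Abstract counting step of Lemma 5.5 (exceptional vertices): Let G be a Δ²-regular bipartite graph on parts V_0, V_1 of equal size with λ(G) ≤ 4Δ, let S^e ⊆ V_0 and T ⊆ V_1 with |T|/|V_1| ≤ δ/(4Δ), and suppose every vertex of S^e has degree at least (δ/16)·Δ^{3/2−ε} into T for some 0 < ε < 1/2 and δ > 0, where Δ is large enough that (Δ²·δ/(4Δ)) ≤ (δ/32)·Δ^{3/2−ε}. Then |S^e| ≤ (2^{14}/δ²)·Δ^{−(1−2ε)}·|T|. -/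
open Finset

/-- Abstract counting step of Lemma 5.5 of the paper (exceptional vertices): in
a `Δ²`-regular bipartite (multi)graph with edge multiplicities `m` satisfying
the expander mixing lemma with `λ(G) ≤ 4Δ`, if `|T|/|V₁| ≤ δ/(4Δ)`, every vertex
of `Sᵉ` has degree at least `(δ/16)·Δ^{3/2-ε}` into `T`, and `Δ` is large enough
that `Δ²·(δ/(4Δ)) ≤ (δ/32)·Δ^{3/2-ε}`, then
`|Sᵉ| ≤ (2¹⁴/δ²)·Δ^{-(1-2ε)}·|T|`. -/
theorem exceptional_count_bound {V0 V1 : Type*} [Fintype V0] [Fintype V1]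
    (hcard : Fintype.card V0 = Fintype.card V1)
    (m : V0 → V1 → ℕ) (Δ : ℕ) (hΔ : 0 < Δ)
    (hreg : ∀ v : V0, ∑ t : V1, m v t = Δ ^ 2)
    (hmix : ∀ (S : Finset V0) (T : Finset V1),
      ((∑ s ∈ S, ∑ t ∈ T, m s t : ℕ) : ℝ) ≤
        (Δ : ℝ) ^ 2 / (Fintype.card V0) * S.card * T.card +
          4 * Δ * Real.sqrt ((S.card : ℝ) * T.card))
    (δ ε : ℝ) (hδ : 0 < δ) (hε : 0 < ε) (hε' : ε < 1 / 2)
    (Se : Finset V0) (T : Finset V1)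
    (hT : (T.card : ℝ) / (Fintype.card V1) ≤ δ / (4 * Δ))
    (hbig : (Δ : ℝ) ^ 2 * (δ / (4 * Δ)) ≤ (δ / 32) * (Δ : ℝ) ^ ((3 : ℝ) / 2 - ε))
    (hdeg : ∀ s ∈ Se,
      (δ / 16) * (Δ : ℝ) ^ ((3 : ℝ) / 2 - ε) ≤ ((∑ t ∈ T, m s t : ℕ) : ℝ)) :
    (Se.card : ℝ) ≤ (2 ^ 14 / δ ^ 2) * (Δ : ℝ) ^ (-(1 - 2 * ε)) * T.card := by
  classical
  set D : ℝ := (Δ : ℝ) with hDdef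
  have hD0 : (0:ℝ) < D := by rw [hDdef]; exact_mod_cast hΔ
  set P : ℝ := D ^ ((3:ℝ)/2 - ε) with hPdef
  have hP0 : 0 < P := Real.rpow_pos_of_pos hD0 _
  set a : ℝ := (Se.card : ℝ) with hadef
  set t : ℝ := (T.card : ℝ) with htdef
  have ha0 : (0:ℝ) ≤ a := Nat.cast_nonneg _
  have ht0 : (0:ℝ) ≤ t := Nat.cast_nonneg _
  have hX0 : (0:ℝ) < D ^ (-(1 - 2*ε)) := Real.rpow_pos_of_pos hD0 _
  by_cases haz : a = 0
  · rw [haz]; positivity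
  have ha : 0 < a := lt_of_le_of_ne ha0 (Ne.symm haz)
  have hSene : Se.Nonempty := Finset.card_pos.mp (Nat.cast_pos.mp (by rw [← hadef]; exact ha))
  have hN : 0 < (Fintype.card V0 : ℝ) := by
    obtain ⟨s, _⟩ := hSene
    exact_mod_cast Fintype.card_pos_iff.mpr ⟨s⟩
  -- lower bound on edge count
  have hlow : (δ/16) * P * a ≤ ((∑ s ∈ Se, ∑ t ∈ T, m s t : ℕ) : ℝ) := by
    have : ∑ s ∈ Se, (δ/16) * P ≤ ∑ s ∈ Se, ((∑ t ∈ T, m s t : ℕ) : ℝ) :=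
      Finset.sum_le_sum hdeg
    rw [Finset.sum_const, nsmul_eq_mul] at this
    push_cast at this ⊢
    linarith
  have hup := hmix Se T
  -- absorb the first term
  have habs : D ^ 2 / (Fintype.card V0) * a * t ≤ (δ/32) * P * a := by
    have h1 : t / (Fintype.card V0) ≤ δ / (4 * D) := by
      rw [hcard]; exact hT
    have h2 : D ^ 2 * (t / (Fintype.card V0)) ≤ (δ/32) * P := by
      calc D ^ 2 * (t / (Fintype.card V0)) ≤ D ^ 2 * (δ / (4 * D)) := by
            apply mul_le_mul_of_nonneg_left h1 (by positivity)
        _ ≤ (δ/32) * P := hbig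
    calc D ^ 2 / (Fintype.card V0) * a * t = (D ^ 2 * (t / (Fintype.card V0))) * a := by ring
      _ ≤ ((δ/32) * P) * a := mul_le_mul_of_nonneg_right h2 ha0
      _ = (δ/32) * P * a := by ring
  have hkey : (δ/32) * P * a ≤ 4 * D * Real.sqrt (a * t) := by
    have := hup
    nlinarith [hlow, habs]
  have hsqrt : Real.sqrt (a * t) ^ 2 = a * t := Real.sq_sqrt (mul_nonneg ha0 ht0)
  have hsq : ((δ/32) * P * a) ^ 2 ≤ 16 * D ^ 2 * (a * t) := by
    have h1 : ((δ/32) * P * a) ^ 2 ≤ (4 * D * Real.sqrt (a * t)) ^ 2 := by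
      apply pow_le_pow_left₀ (by positivity) hkey
    calc ((δ/32) * P * a) ^ 2 ≤ (4 * D * Real.sqrt (a * t)) ^ 2 := h1
      _ = 16 * D ^ 2 * (Real.sqrt (a * t) ^ 2) := by ring
      _ = 16 * D ^ 2 * (a * t) := by rw [hsqrt]
  have hrel : D ^ (-(1 - 2*ε)) * P ^ 2 = D ^ 2 := by
    have h2 : P ^ (2:ℕ) = P ^ ((2:ℕ):ℝ) := (Real.rpow_natCast P 2).symm
    have h3 : D ^ (2:ℕ) = D ^ ((2:ℕ):ℝ) := (Real.rpow_natCast D 2).symm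
    rw [h2, h3, hPdef, ← Real.rpow_mul hD0.le, ← Real.rpow_add hD0]
    congr 1
    push_cast
    ring
  -- finish
  have hfin : (δ/32)^2 * P^2 * a ≤ 16 * (D ^ (-(1 - 2*ε)) * P^2) * t := by
    rw [hrel]
    have := hsq
    nlinarith [ha, hP0]
  have hP2 : (0:ℝ) < P^2 := by positivity
  have h5 : (δ/32)^2 * a ≤ 16 * (D ^ (-(1 - 2*ε))) * t := by
    refine le_of_mul_le_mul_right ?_ hP2
    have := hfin
    ring_nf at this ⊢
    linarith
  calc a = (1024/δ^2) * ((δ/32)^2 * a) := by field_simp; ring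
    _ ≤ (1024/δ^2) * (16 * (D ^ (-(1 - 2*ε))) * t) :=
        mul_le_mul_of_nonneg_left h5 (by positivity)
    _ = (2 ^ 14 / δ ^ 2) * (D ^ (-(1 - 2*ε))) * t := by ring
end
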